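/- Let d ≥ 1, let Γ be an additive sub-semigroup of ℕ^{d+1} that generates ℤ^{d+1} as a group, and let F : Γ → ℝ be subadditive and satisfy F(γ) ≥ C·|γ| for all γ ∈ Γ, for some real constant C. Let c : Δ(Γ)° → ℝ be the function defined by c(α) = lim_{k→∞} F((m_k α_k, m_k)) / m_k for any sequence of positive integers m_k → ∞ and α_k ∈ Λ_{m_k}(Γ) with α_k → α. Then c is a convex function on the open convex set Δ(Γ)°, and in particular c is continuous on Δ(Γ)°. -/

import Mathlib

open Filter Topology

/-- The image of a vector of natural numbers in `ℝ^n`. -/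
def natVecR {n : ℕ} (γ : Fin n → ℕ) : Fin n → ℝ := fun i => (γ i : ℝ)

/-- `Σ(Γ)`: the closed convex cone generated by `Γ ⊆ ℕ^n` in `ℝ^n`, i.e. the topological
closure of the set of all finite nonnegative real linear combinations of elements of `Γ`. -/
def coneOf {n : ℕ} (Γ : Set (Fin n → ℕ)) : Set (Fin n → ℝ) :=
  closure { x | ∃ (k : ℕ) (c : Fin k → ℝ) (g : Fin k → (Fin n → ℕ)),
    (∀ i, 0 ≤ c i) ∧ (∀ i, g i ∈ Γ) ∧ x = ∑ i, c i • natVecR (g i) }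

/-- `Δ(Γ) = {x ∈ ℝ^d : (x,1) ∈ Σ(Γ)}`. -/
def deltaOf {d : ℕ} (Γ : Set (Fin (d+1) → ℕ)) : Set (Fin d → ℝ) :=
  { x | Fin.snoc x (1 : ℝ) ∈ coneOf Γ }

/-!
A convex set and its closure have the same interior in finite dimension, so for `x` in the
interior of `Δ(Γ)` the point `(x, 1)` is a finite combination `∑ cᵢ γᵢ` with `cᵢ ≥ 0`,
`γᵢ ∈ Γ`, and `∑ ⌊m cᵢ⌋ γᵢ ∈ Γ` approximates `m (x, 1)`. For `z = a x + b y`, the sum of the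
approximants of `m a (x, 1)` and `m b (y, 1)` approximates `m (z, 1)`; dividing the
subadditivity inequality for `F` by `m` and letting `m → ∞` gives `c z ≤ a c x + b c y`.
-/

open scoped NNReal

theorem natVecR_add {n : ℕ} (γ γ' : Fin n → ℕ) : natVecR (γ + γ') = natVecR γ + natVecR γ' := by
  ext i
  simp [natVecR]

theorem Convex.interior_closure_eq_interior_of_finiteDimensional {V : Type*}
    [NormedAddCommGroup V] [NormedSpace ℝ V] [FiniteDimensional ℝ V] {s : Set V}
    (hs : Convex ℝ s) : interior (closure s) = interior s := by
  rcases (interior (closure s)).eq_empty_or_nonempty with h | ⟨x, hx⟩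
  · exact h.trans (Set.subset_empty_iff.mp (h ▸ interior_mono subset_closure)).symm
  refine hs.interior_closure_eq_interior_of_nonempty_interior ?_
  rw [hs.interior_nonempty_iff_affineSpan_eq_top, eq_top_iff,
    ← hs.closure.interior_nonempty_iff_affineSpan_eq_top.1 ⟨x, hx⟩]
  exact affineSpan_le.2 (closure_minimal (subset_affineSpan ℝ s)
    (affineSpan ℝ s).closed_of_finiteDimensional)

theorem coneOf_eq_closure_hull {n : ℕ} (Γ : Set (Fin n → ℕ)) :
    coneOf Γ = closure (PointedCone.hull ℝ (natVecR '' Γ)) := by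
  unfold coneOf
  congr 1
  ext x
  rw [SetLike.mem_coe, Submodule.mem_span_set']
  constructor
  · rintro ⟨k, c, g, hc, hg, rfl⟩
    exact ⟨k, fun i => ⟨c i, hc i⟩, fun i => ⟨natVecR (g i), g i, hg i, rfl⟩, rfl⟩
  · rintro ⟨k, c, g, rfl⟩
    choose γ hγ hγg using fun i => (g i).2
    exact ⟨k, fun i => c i, γ, fun i => (c i).2, hγ, by simp [hγg]⟩

theorem smul_mem_coneOf {n : ℕ} {Γ : Set (Fin n → ℕ)} {r : ℝ} (hr : 0 ≤ r) {x : Fin n → ℝ}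
    (hx : x ∈ coneOf Γ) : r • x ∈ coneOf Γ := by
  rw [coneOf_eq_closure_hull, ← Submodule.topologicalClosure_coe] at *
  exact Submodule.smul_mem _ (⟨r, hr⟩ : ℝ≥0) hx

theorem convex_coneOf {n : ℕ} (Γ : Set (Fin n → ℕ)) : Convex ℝ (coneOf Γ) := by
  rw [coneOf_eq_closure_hull]
  exact (PointedCone.convex _).closure

theorem smul_snoc_add_smul_snoc {d : ℕ} (x y : Fin d → ℝ) (a b s t : ℝ) :
    a • (Fin.snoc x s : Fin (d+1) → ℝ) + b • Fin.snoc y t =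
      Fin.snoc (a • x + b • y) (a * s + b * t) := by
  ext j
  induction j using Fin.lastCases <;> simp

theorem convex_deltaOf {d : ℕ} (Γ : Set (Fin (d+1) → ℕ)) : Convex ℝ (deltaOf Γ) := by
  intro x hx y hy a b ha hb hab
  have h := convex_coneOf Γ hx hy ha hb hab
  rwa [smul_snoc_add_smul_snoc, mul_one, mul_one, hab] at h

theorem smul_snoc_inv_smul_init {d : ℕ} {y : Fin (d+1) → ℝ} (hy : y (Fin.last d) ≠ 0) :
    y (Fin.last d) • (Fin.snoc ((y (Fin.last d))⁻¹ • Fin.init y) 1 : Fin (d+1) → ℝ) = y := by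
  ext j
  induction j using Fin.lastCases <;> simp [Fin.init, hy]

theorem snoc_one_mem_interior_coneOf {d : ℕ} {Γ : Set (Fin (d+1) → ℕ)} {α : Fin d → ℝ}
    (hα : α ∈ interior (deltaOf Γ)) : Fin.snoc α (1 : ℝ) ∈ interior (coneOf Γ) := by
  set f : (Fin (d+1) → ℝ) → Fin d → ℝ := fun y => (y (Fin.last d))⁻¹ • Fin.init y
  have hf : ContinuousAt f (Fin.snoc α 1) :=
    ((continuous_apply _).continuousAt.inv₀ (by simp)).smul (by fun_prop)
  have hfα : f (Fin.snoc α 1) = α := by simp [f, Fin.init_snoc]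
  have hpre : f ⁻¹' interior (deltaOf Γ) ∈ 𝓝 (Fin.snoc α (1 : ℝ)) :=
    hf.preimage_mem_nhds (by rw [hfα]; exact isOpen_interior.mem_nhds hα)
  have hpos : {y : Fin (d+1) → ℝ | 0 < y (Fin.last d)} ∈ 𝓝 (Fin.snoc α (1 : ℝ)) :=
    (isOpen_lt continuous_const (continuous_apply _)).mem_nhds (by simp)
  rw [mem_interior_iff_mem_nhds]
  filter_upwards [hpre, hpos] with y hy hy0
  rw [← smul_snoc_inv_smul_init hy0.ne']
  exact smul_mem_coneOf hy0.le (interior_subset hy : f y ∈ deltaOf Γ)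

theorem snoc_one_mem_hull_of_mem_interior {d : ℕ} {Γ : Set (Fin (d+1) → ℕ)} {α : Fin d → ℝ}
    (hα : α ∈ interior (deltaOf Γ)) : Fin.snoc α (1 : ℝ) ∈ PointedCone.hull ℝ (natVecR '' Γ) := by
  have h := snoc_one_mem_interior_coneOf hα
  rw [coneOf_eq_closure_hull,
    (PointedCone.convex _).interior_closure_eq_interior_of_finiteDimensional] at h
  exact interior_subset h

theorem exists_tendsto_inv_smul_of_mem_hull {n : ℕ} (S : AddSubmonoid (Fin n → ℕ))
    {v : Fin n → ℝ} (hv : v ∈ PointedCone.hull ℝ (natVecR '' S)) :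
    ∃ u : ℕ → Fin n → ℕ, (∀ m, u m ∈ S) ∧
      Tendsto (fun m : ℕ => (m : ℝ)⁻¹ • natVecR (u m)) atTop (𝓝 v) := by
  obtain ⟨k, c, g, rfl⟩ := Submodule.mem_span_set'.mp hv
  choose γ hγ hγg using fun i => (g i).2
  refine ⟨fun m => ∑ i, ⌊(c i : ℝ) * m⌋₊ • γ i, fun m => sum_mem fun i _ => nsmul_mem (hγ i) _, ?_⟩
  have hfloor (i : Fin k) : Tendsto (fun m : ℕ => (⌊(c i : ℝ) * m⌋₊ : ℝ) / m) atTop (𝓝 (c i)) :=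
    (tendsto_nat_floor_mul_div_atTop (c i).2).comp tendsto_natCast_atTop_atTop
  convert tendsto_finsetSum Finset.univ fun i _ => (hfloor i).smul_const (natVecR (γ i)) using 1
  · ext m j
    simp [natVecR, Finset.mul_sum, div_eq_inv_mul, mul_assoc]
  · simp [hγg]

def IsChebyshevTransform {d : ℕ} (Γ : Set (Fin (d+1) → ℕ)) (F : (Fin (d+1) → ℕ) → ℝ)
    (c : (Fin d → ℝ) → ℝ) : Prop :=
  ∀ α ∈ interior (deltaOf Γ),
    ∀ (m : ℕ → ℕ) (β : ℕ → Fin d → ℕ),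
      (∀ k, 0 < m k) →
      Tendsto (fun k => m k) atTop atTop →
      (∀ k, Fin.snoc (β k) (m k) ∈ Γ) →
      Tendsto (fun k => (fun i => (β k i : ℝ) / (m k : ℝ))) atTop (nhds α) →
      Tendsto (fun k => F (Fin.snoc (β k) (m k)) / (m k : ℝ)) atTop (nhds (c α))

namespace IsChebyshevTransform

variable {d : ℕ} {Γ : Set (Fin (d+1) → ℕ)} {F : (Fin (d+1) → ℕ) → ℝ} {c : (Fin d → ℝ) → ℝ}
  {α : Fin d → ℝ}

theorem tendsto (hc : IsChebyshevTransform Γ F c) (hα : α ∈ interior (deltaOf Γ))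
    {m : ℕ → ℕ} {β : ℕ → Fin d → ℕ} (hm : Tendsto m atTop atTop)
    (hΓ : ∀ k, Fin.snoc (β k) (m k) ∈ Γ)
    (hβ : Tendsto (fun k => (fun i => (β k i : ℝ) / (m k : ℝ))) atTop (𝓝 α)) :
    Tendsto (fun k => F (Fin.snoc (β k) (m k)) / (m k : ℝ)) atTop (𝓝 (c α)) := by
  obtain ⟨K, hK⟩ := eventually_atTop.1 (hm.eventually_gt_atTop 0)
  have hshift := tendsto_add_atTop_nat K
  exact (tendsto_add_atTop_iff_nat K).1 <| hc α hα (fun k => m (k + K)) (fun k => β (k + K))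
    (fun k => hK _ (Nat.le_add_left K k)) (hm.comp hshift) (fun k => hΓ _) (hβ.comp hshift)

theorem tendsto_div_of_tendsto_inv_smul (hc : IsChebyshevTransform Γ F c)
    (hα : α ∈ interior (deltaOf Γ)) {γ : ℕ → Fin (d+1) → ℕ} (hγ : ∀ m, γ m ∈ Γ) {s : ℝ}
    (hs : 0 < s)
    (hlim : Tendsto (fun m : ℕ => (m : ℝ)⁻¹ • natVecR (γ m)) atTop (𝓝 (s • Fin.snoc α 1))) :
    Tendsto (fun m : ℕ => F (γ m) / m) atTop (𝓝 (s * c α)) := by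
  set L : ℕ → ℕ := fun m => γ m (Fin.last d)
  have hcoord (j : Fin (d+1)) :
      Tendsto (fun m : ℕ => (γ m j : ℝ) / m) atTop (𝓝 (s * (Fin.snoc α 1 : Fin (d+1) → ℝ) j)) := by
    simpa [natVecR, div_eq_inv_mul] using tendsto_pi_nhds.1 hlim j
  have hLm : Tendsto (fun m => (L m : ℝ) / m) atTop (𝓝 s) := by
    simpa using hcoord (Fin.last d)
  have hm0 : ∀ᶠ m : ℕ in atTop, (m : ℝ) ≠ 0 :=
    (eventually_gt_atTop 0).mono fun m hm => by positivity
  have hL : Tendsto L atTop atTop := by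
    refine tendsto_natCast_atTop_iff.1 <|
      (hLm.pos_mul_atTop hs tendsto_natCast_atTop_atTop).congr' ?_
    filter_upwards [hm0] with m hm
    exact div_mul_cancel₀ _ hm
  have hL0 : ∀ᶠ m in atTop, (L m : ℝ) ≠ 0 :=
    (hL.eventually_gt_atTop 0).mono fun m hm => by positivity
  have hβ : Tendsto (fun m i => (Fin.init (γ m) i : ℝ) / L m) atTop (𝓝 α) := by
    refine tendsto_pi_nhds.2 fun i => ?_
    convert ((hcoord i.castSucc).div hLm hs.ne').congr' ?_ using 2
    · simp [hs.ne']
    · filter_upwards [hm0] with m hm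
      simp [Fin.init, div_div_div_cancel_right₀ hm]
  have hsnoc (m : ℕ) : Fin.snoc (Fin.init (γ m)) (L m) = γ m := Fin.snoc_init_self _
  have hF := hc.tendsto hα hL (fun m => (hsnoc m).symm ▸ hγ m) hβ
  simp only [hsnoc] at hF
  rw [mul_comm]
  refine (hF.mul hLm).congr' ?_
  filter_upwards [hL0] with m hm
  exact div_mul_div_cancel₀ hm

theorem convexOn (S : AddSubmonoid (Fin (d+1) → ℕ))
    (hsub : ∀ x ∈ S, ∀ y ∈ S, F (x + y) ≤ F x + F y)
    (hc : IsChebyshevTransform (S : Set (Fin (d+1) → ℕ)) F c) :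
    ConvexOn ℝ (interior (deltaOf (S : Set (Fin (d+1) → ℕ)))) c := by
  have hconv := (convex_deltaOf (S : Set (Fin (d+1) → ℕ))).interior
  refine convexOn_iff_forall_pos.2 ⟨hconv, fun x hx y hy a b ha hb hab => ?_⟩
  obtain ⟨u, huS, hu⟩ := exists_tendsto_inv_smul_of_mem_hull S <|
    Submodule.smul_mem _ (⟨a, ha.le⟩ : ℝ≥0) (snoc_one_mem_hull_of_mem_interior hx)
  obtain ⟨v, hvS, hv⟩ := exists_tendsto_inv_smul_of_mem_hull S <|
    Submodule.smul_mem _ (⟨b, hb.le⟩ : ℝ≥0) (snoc_one_mem_hull_of_mem_interior hy)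
  have hFu := hc.tendsto_div_of_tendsto_inv_smul hx huS ha hu
  have hFv := hc.tendsto_div_of_tendsto_inv_smul hy hvS hb hv
  have huv : Tendsto (fun m : ℕ => (m : ℝ)⁻¹ • natVecR (u m + v m)) atTop
      (𝓝 ((1 : ℝ) • Fin.snoc (a • x + b • y) 1)) := by
    simpa [natVecR_add, smul_add, smul_snoc_add_smul_snoc, hab] using hu.add hv
  have hFuv := hc.tendsto_div_of_tendsto_inv_smul (hconv hx hy ha.le hb.le hab)
    (fun m => add_mem (huS m) (hvS m)) one_pos huv
  rw [one_mul] at hFuv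
  refine le_of_tendsto_of_tendsto' hFuv (hFu.add hFv) fun m => ?_
  rw [← add_div]
  exact div_le_div_of_nonneg_right (hsub _ (huS m) _ (hvS m)) m.cast_nonneg

end IsChebyshevTransform

theorem chebyshev_convex_continuous_general (d : ℕ) (Γ : Set (Fin (d+1) → ℕ))
    (h0 : (0 : Fin (d+1) → ℕ) ∈ Γ)
    (hadd : ∀ x ∈ Γ, ∀ y ∈ Γ, x + y ∈ Γ)
    (F : (Fin (d+1) → ℕ) → ℝ)
    (hsub : ∀ x ∈ Γ, ∀ y ∈ Γ, F (x + y) ≤ F x + F y)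
    (c : (Fin d → ℝ) → ℝ)
    (hc : ∀ α ∈ interior (deltaOf Γ),
      ∀ (m : ℕ → ℕ) (β : ℕ → Fin d → ℕ),
        (∀ k, 0 < m k) →
        Tendsto (fun k => m k) atTop atTop →
        (∀ k, Fin.snoc (β k) (m k) ∈ Γ) →
        Tendsto (fun k => (fun i => (β k i : ℝ) / (m k : ℝ))) atTop (nhds α) →
        Tendsto (fun k => F (Fin.snoc (β k) (m k)) / (m k : ℝ)) atTop (nhds (c α))) :
    ConvexOn ℝ (interior (deltaOf Γ)) c ∧ ContinuousOn c (interior (deltaOf Γ)) := by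
  let S : AddSubmonoid (Fin (d+1) → ℕ) :=
    { carrier := Γ, add_mem' := fun hx hy => hadd _ hx _ hy, zero_mem' := h0 }
  have hconv : ConvexOn ℝ (interior (deltaOf Γ)) c := IsChebyshevTransform.convexOn S hsub hc
  exact ⟨hconv, hconv.continuousOn isOpen_interior⟩

/-- The Chebyshev transform `c`, defined on the interior of `Δ(Γ)` as the limit of
`F((m_k α_k, m_k))/m_k` for any sequence `α_k ∈ Λ_{m_k}(Γ)` converging to `α`,
is convex and continuous on the interior of `Δ(Γ)`. -/
theorem chebyshev_convex_continuous (d : ℕ) (hd : 1 ≤ d) (Γ : Set (Fin (d+1) → ℕ))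
    (h0 : (0 : Fin (d+1) → ℕ) ∈ Γ)
    (hadd : ∀ x ∈ Γ, ∀ y ∈ Γ, x + y ∈ Γ)
    (hgen : AddSubgroup.closure
        ((fun γ : Fin (d+1) → ℕ => (fun i => (γ i : ℤ))) '' Γ) = ⊤)
    (F : (Fin (d+1) → ℕ) → ℝ) (C : ℝ)
    (hsub : ∀ x ∈ Γ, ∀ y ∈ Γ, F (x + y) ≤ F x + F y)
    (hlb : ∀ γ ∈ Γ, C * (∑ i, (γ i : ℝ)) ≤ F γ)
    (c : (Fin d → ℝ) → ℝ)
    (hc : ∀ α ∈ interior (deltaOf Γ),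
      ∀ (m : ℕ → ℕ) (β : ℕ → Fin d → ℕ),
        (∀ k, 0 < m k) →
        Tendsto (fun k => m k) atTop atTop →
        (∀ k, Fin.snoc (β k) (m k) ∈ Γ) →
        Tendsto (fun k => (fun i => (β k i : ℝ) / (m k : ℝ))) atTop (nhds α) →
        Tendsto (fun k => F (Fin.snoc (β k) (m k)) / (m k : ℝ)) atTop (nhds (c α))) :
    ConvexOn ℝ (interior (deltaOf Γ)) c ∧ ContinuousOn c (interior (deltaOf Γ)) :=
  chebyshev_convex_continuous_general d Γ h0 hadd F hsub c hc
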